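/- Let h : ℕ → ℕ be strictly increasing with range Y, and let X ⊆ ℕ. If the density ρ(Y) exists, then ρ̲(h(X)) = ρ(Y) · ρ̲(X), where h(X) is the image of X under h. -/

import Mathlib

open Filter Topology
open scoped symmDiff Classical

/-- ρ_n(A): the density of A below n. -/
noncomputable def partialDensity (A : Set ℕ) (n : ℕ) : ℝ :=
  ((Finset.range n).filter (fun k => k ∈ A)).card / n

/-- Lower density ρ̲(A). -/
noncomputable def lowerDensity (A : Set ℕ) : ℝ := liminf (partialDensity A) atTop

/-- Upper density ρ̄(A). -/
noncomputable def upperDensity (A : Set ℕ) : ℝ := limsup (partialDensity A) atTop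

/-- A has density r. -/
def HasDensity (A : Set ℕ) (r : ℝ) : Prop := Tendsto (partialDensity A) atTop (𝓝 r)

/-- A set of naturals is computable. -/
def IsComputableSet (A : Set ℕ) : Prop := ComputablePred (· ∈ A)

/-- A is coarsely computable at density r. -/
def CoarselyComputableAt (A : Set ℕ) (r : ℝ) : Prop :=
  ∃ C : Set ℕ, IsComputableSet C ∧ r ≤ lowerDensity {n | n ∈ A ↔ n ∈ C}

/-- γ(A), the coarse computability bound. -/
noncomputable def gammaBound (A : Set ℕ) : ℝ := sSup {r | CoarselyComputableAt A r}

/-- A is partially computable at density r. -/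
def PartiallyComputableAt (A : Set ℕ) (r : ℝ) : Prop :=
  ∃ φ : ℕ →. Bool, Partrec φ ∧ (∀ n b, b ∈ φ n → (b = true ↔ n ∈ A)) ∧
    r ≤ lowerDensity φ.Dom

/-- α(A), the partial computability bound. -/
noncomputable def alphaBound (A : Set ℕ) : ℝ := sSup {r | PartiallyComputableAt A r}

/-- A is generically computable. -/
def GenericallyComputable (A : Set ℕ) : Prop := PartiallyComputableAt A 1

/-- A is coarsely computable. -/
def CoarselyComputable (A : Set ℕ) : Prop :=
  ∃ C : Set ℕ, IsComputableSet C ∧ HasDensity (A ∆ C) 0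

/-! The elements of `h '' X` below `u` are the images of the elements of `X` below
`g u := Nat.count (· ∈ Set.range h) u`, the least `k` with `u ≤ h k`; hence
`ρ_u(h '' X) = ρ_u(range h) · ρ_{g u}(X)`. Since `g` is monotone with `g ∘ h = id`, reindexing a
bounded sequence along `g` does not change its liminf, and the liminf of a product whose first,
nonnegative, factor converges to `r` is `r` times the liminf of the second factor. -/

theorem partialDensity_nonneg (A : Set ℕ) (n : ℕ) : 0 ≤ partialDensity A n := by
  unfold partialDensity
  positivity

theorem partialDensity_le_one (A : Set ℕ) (n : ℕ) : partialDensity A n ≤ 1 := by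
  unfold partialDensity
  rcases eq_or_ne n 0 with rfl | hn
  · simp
  · rw [div_le_one (by positivity)]
    exact_mod_cast (Finset.card_filter_le _ _).trans (Finset.card_range n).le

theorem Filter.Tendsto.liminf_mul_of_nonneg {ι : Type*} {l : Filter ι} [l.NeBot] {u v : ι → ℝ}
    {r : ℝ} (hu : Tendsto u l (𝓝 r)) (hu₀ : 0 ≤ᶠ[l] u) (hv₀ : 0 ≤ᶠ[l] v)
    (hv : IsCoboundedUnder (· ≥ ·) l v) :
    liminf (u * v) l = r * liminf v l := by
  apply le_antisymm
  · simpa only [hu.limsup_eq] using liminf_mul_le hu₀ hu.isBoundedUnder_le hv₀ hv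
  · simpa only [hu.liminf_eq] using le_liminf_mul hu₀ hu.isBoundedUnder_le hv₀ hv

section Reindex

variable {β : Type*} [ConditionallyCompleteLattice β] {f : ℕ → β}

theorem Filter.Tendsto.liminf_le_liminf_comp_of_bdd {m : ℕ → ℕ} (hm : Tendsto m atTop atTop)
    (hbelow : BddBelow (Set.range f)) (habove : BddAbove (Set.range f)) :
    liminf f atTop ≤ liminf (fun n => f (m n)) atTop :=
  hm.liminf_le_liminf_comp habove.isBoundedUnder_of_range.isCoboundedUnder_ge
    hbelow.isBoundedUnder_of_range

theorem Filter.liminf_comp_eq_of_leftInverse (hbelow : BddBelow (Set.range f))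
    (habove : BddAbove (Set.range f)) {g s : ℕ → ℕ} (hg : Tendsto g atTop atTop)
    (hs : Tendsto s atTop atTop) (hgs : Function.LeftInverse g s) :
    liminf (fun n => f (g n)) atTop = liminf f atTop := by
  refine le_antisymm ?_ (hg.liminf_le_liminf_comp_of_bdd hbelow habove)
  calc liminf (fun n => f (g n)) atTop ≤ liminf (fun n => f (g (s n))) atTop :=
        hs.liminf_le_liminf_comp_of_bdd (hbelow.mono (Set.range_comp_subset_range g f))
          (habove.mono (Set.range_comp_subset_range g f))
    _ = liminf f atTop := by simp only [hgs _]

end Reindex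

section StrictMono

variable {h : ℕ → ℕ}

theorem StrictMono.nth_mem_range_eq (hh : StrictMono h) : Nat.nth (· ∈ Set.range h) = h := by
  have hall : ∀ n, ∀ hf : (Set.ofPred (· ∈ Set.range h)).Finite, n < hf.toFinset.card :=
    fun _ hf => absurd hf (Set.infinite_range_of_injective hh.injective)
  funext n
  symm
  refine Nat.eq_nth_of_strictMonoOn_of_mapsTo_of_surjOn h ?_ ?_ ?_ (hall n)
  · rintro _ ⟨k, rfl⟩
    exact ⟨k, hall k, rfl⟩
  · exact fun k _ => ⟨k, rfl⟩
  · exact hh.strictMonoOn _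

theorem StrictMono.lt_count_mem_range_iff (hh : StrictMono h) {k u : ℕ} :
    k < Nat.count (· ∈ Set.range h) u ↔ h k < u := by
  rw [Nat.lt_nth_iff_count_lt (p := (· ∈ Set.range h)) (Set.infinite_range_of_injective
    hh.injective), hh.nth_mem_range_eq]

theorem StrictMono.count_mem_range_apply (hh : StrictMono h) (n : ℕ) :
    Nat.count (· ∈ Set.range h) (h n) = n := by
  calc Nat.count (· ∈ Set.range h) (h n)
      = Nat.count (· ∈ Set.range h) (Nat.nth (· ∈ Set.range h) n) := by rw [hh.nth_mem_range_eq]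
    _ = n := Nat.count_nth_of_infinite (p := (· ∈ Set.range h))
      (Set.infinite_range_of_injective hh.injective) n

theorem StrictMono.tendsto_count_mem_range (hh : StrictMono h) :
    Tendsto (Nat.count (· ∈ Set.range h)) atTop atTop :=
  Nat.count_monotone _ |>.tendsto_atTop_atTop fun n => ⟨h n, (hh.count_mem_range_apply n).ge⟩

theorem StrictMono.count_mem_image (hh : StrictMono h) (S : Set ℕ) (u : ℕ) :
    Nat.count (· ∈ h '' S) u = Nat.count (· ∈ S) (Nat.count (· ∈ Set.range h) u) := by
  rw [Nat.count_eq_card_filter_range, Nat.count_eq_card_filter_range (· ∈ S),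
    ← Finset.card_image_of_injective {k ∈ Finset.range _ | k ∈ S} hh.injective]
  congr 1
  ext m
  simp only [Finset.mem_image, Finset.mem_filter, Finset.mem_range, Set.mem_image,
    hh.lt_count_mem_range_iff]
  constructor
  · rintro ⟨hm, k, hk, rfl⟩
    exact ⟨k, ⟨hm, hk⟩, rfl⟩
  · rintro ⟨k, ⟨hm, hk⟩, rfl⟩
    exact ⟨hm, k, hk, rfl⟩

theorem StrictMono.partialDensity_image (hh : StrictMono h) (S : Set ℕ) (u : ℕ) :
    partialDensity (h '' S) u =
      partialDensity (Set.range h) u * partialDensity S (Nat.count (· ∈ Set.range h) u) := by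
  simp only [partialDensity, ← Nat.count_eq_card_filter_range, hh.count_mem_image]
  set c := Nat.count (· ∈ Set.range h) u
  rcases eq_or_ne c 0 with h0 | h0
  · simp [h0]
  · rw [div_mul_div_comm, mul_comm (u : ℝ), mul_div_mul_left _ _ (Nat.cast_ne_zero.mpr h0)]

end StrictMono

theorem lowerDensity_image_strictMono (h : ℕ → ℕ) (X : Set ℕ) (r : ℝ)
    (hmono : StrictMono h) (hr : HasDensity (Set.range h) r) :
    lowerDensity (h '' X) = r * lowerDensity X := by
  set g := Nat.count (· ∈ Set.range h)
  have hbdd : BddBelow (Set.range (partialDensity X)) ∧ BddAbove (Set.range (partialDensity X)) :=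
    ⟨⟨0, Set.forall_mem_range.2 (partialDensity_nonneg X)⟩,
      ⟨1, Set.forall_mem_range.2 (partialDensity_le_one X)⟩⟩
  calc lowerDensity (h '' X)
      = liminf (partialDensity (Set.range h) * fun u => partialDensity X (g u)) atTop :=
        congrArg (liminf · atTop) (funext (hmono.partialDensity_image X))
    _ = r * liminf (fun u => partialDensity X (g u)) atTop :=
        hr.liminf_mul_of_nonneg (.of_forall (partialDensity_nonneg _))
          (.of_forall fun _ => partialDensity_nonneg X _)
          (isBoundedUnder_of ⟨1, fun _ => partialDensity_le_one X _⟩).isCoboundedUnder_ge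
    _ = r * lowerDensity X :=
        congrArg (r * ·) (liminf_comp_eq_of_leftInverse hbdd.1 hbdd.2
          hmono.tendsto_count_mem_range hmono.tendsto_atTop hmono.count_mem_range_apply)
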